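/- Let n ≥ 1, let H = ∏_{i=1}^n [a_i, b_i] ⊆ ℝ^n be a rectangle with a_i < b_i for all i, and let X ⊆ H be Lebesgue measurable. Then lim_{κ → ∞} λ^κ(X) = λ(X), where λ is n-dimensional Lebesgue measure. -/
import Mathlib


open MeasureTheory Set Filter

/-- The κ-tile of the rectangle `∏ i, [a i, b i]` indexed by the multi-index `k`. -/
noncomputable def tile (n : ℕ) (a b : Fin n → ℝ) (κ : ℕ) (k : Fin n → ℕ) :
    Set (Fin n → ℝ) :=
  Set.univ.pi fun i =>
    Set.Icc (a i + (k i : ℝ) / κ * (b i - a i)) (a i + ((k i : ℝ) + 1) / κ * (b i - a i))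

/-- The common volume of a κ-tile of the rectangle `∏ i, [a i, b i]`. -/
noncomputable def tileVol (n : ℕ) (a b : Fin n → ℝ) (κ : ℕ) : ℝ :=
  ∏ i, (b i - a i) / κ

/-- The tile indexed by `k` belongs to `Tiles^κ(X)`, i.e. the Lebesgue outer measure of the
intersection of the tile with `X` is at least half the volume of the tile. -/
def isApproxTile (n : ℕ) (a b : Fin n → ℝ) (κ : ℕ) (X : Set (Fin n → ℝ))
    (k : Fin n → Fin κ) : Prop :=
  ENNReal.ofReal (tileVol n a b κ) / 2 ≤ volume (tile n a b κ (fun i => (k i : ℕ)) ∩ X)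

open Classical in
/-- The rectangular κ-grid measure `λ^κ(X)`: the total volume of the κ-tiles approximating `X`. -/
noncomputable def gridMeasure (n : ℕ) (a b : Fin n → ℝ) (κ : ℕ)
    (X : Set (Fin n → ℝ)) : ℝ :=
  ∑ k : Fin n → Fin κ, if isApproxTile n a b κ X k then tileVol n a b κ else 0

namespace GridAux

/-- The open version of a tile. -/
noncomputable def itile (n : ℕ) (a b : Fin n → ℝ) (κ : ℕ) (k : Fin n → ℕ) :
    Set (Fin n → ℝ) :=
  Set.univ.pi fun i =>
    Set.Ioo (a i + (k i : ℝ) / κ * (b i - a i)) (a i + ((k i : ℝ) + 1) / κ * (b i - a i))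

variable {n : ℕ} {a b : Fin n → ℝ} {κ : ℕ}

lemma measurableSet_tile (k : Fin n → ℕ) : MeasurableSet (tile n a b κ k) :=
  MeasurableSet.univ_pi fun _ => measurableSet_Icc

lemma measurableSet_itile (k : Fin n → ℕ) : MeasurableSet (itile n a b κ k) :=
  MeasurableSet.univ_pi fun _ => measurableSet_Ioo

lemma itile_subset_tile (k : Fin n → ℕ) : itile n a b κ k ⊆ tile n a b κ k :=
  Set.pi_mono fun _ _ => Set.Ioo_subset_Icc_self

lemma len_eq (hκ : κ ≠ 0) (i : Fin n) (k : Fin n → ℕ) :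
    (a i + ((k i : ℝ) + 1) / κ * (b i - a i)) - (a i + (k i : ℝ) / κ * (b i - a i))
      = (b i - a i) / κ := by
  have hκ' : (κ : ℝ) ≠ 0 := Nat.cast_ne_zero.mpr hκ
  field_simp
  ring

lemma volume_tile (hκ : κ ≠ 0) (hab : ∀ i, a i < b i) (k : Fin n → ℕ) :
    volume (tile n a b κ k) = ENNReal.ofReal (tileVol n a b κ) := by
  rw [tile, volume_pi_pi]
  have h1 : ∀ i : Fin n,
      volume (Set.Icc (a i + (k i : ℝ) / κ * (b i - a i))
        (a i + ((k i : ℝ) + 1) / κ * (b i - a i)))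
        = ENNReal.ofReal ((b i - a i) / κ) := by
    intro i
    rw [Real.volume_Icc, len_eq hκ]
  rw [Finset.prod_congr rfl fun i _ => h1 i, tileVol,
    ENNReal.ofReal_prod_of_nonneg]
  intro i _
  exact div_nonneg (by linarith [(hab i).le]) (Nat.cast_nonneg κ)

lemma volume_itile (hκ : κ ≠ 0) (hab : ∀ i, a i < b i) (k : Fin n → ℕ) :
    volume (itile n a b κ k) = ENNReal.ofReal (tileVol n a b κ) := by
  rw [itile, volume_pi_pi]
  have h1 : ∀ i : Fin n,
      volume (Set.Ioo (a i + (k i : ℝ) / κ * (b i - a i))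
        (a i + ((k i : ℝ) + 1) / κ * (b i - a i)))
        = ENNReal.ofReal ((b i - a i) / κ) := by
    intro i
    rw [Real.volume_Ioo, len_eq hκ]
  rw [Finset.prod_congr rfl fun i _ => h1 i, tileVol,
    ENNReal.ofReal_prod_of_nonneg]
  intro i _
  exact div_nonneg (by linarith [(hab i).le]) (Nat.cast_nonneg κ)

lemma tileVol_nonneg (hab : ∀ i, a i < b i) : 0 ≤ tileVol n a b κ := by
  apply Finset.prod_nonneg
  intro i _
  exact div_nonneg (by linarith [(hab i).le]) (Nat.cast_nonneg κ)

lemma exists_mem_tile (hκ : κ ≠ 0) (hab : ∀ i, a i < b i) {x : Fin n → ℝ}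
    (hx : x ∈ Set.univ.pi fun i => Set.Icc (a i) (b i)) :
    ∃ k : Fin n → Fin κ, x ∈ tile n a b κ fun i => (k i : ℕ) := by
  have hκ' : 0 < κ := Nat.pos_of_ne_zero hκ
  refine ⟨fun i => ⟨min (⌊(x i - a i) / (b i - a i) * κ⌋₊) (κ - 1), by omega⟩, ?_⟩
  intro i _
  have hL0 : 0 < b i - a i := sub_pos.mpr (hab i)
  have hxi := hx i (Set.mem_univ i)
  set t : ℝ := (x i - a i) / (b i - a i) with ht
  have ht0 : 0 ≤ t := div_nonneg (by linarith [hxi.1]) hL0.le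
  have ht1 : t ≤ 1 := (div_le_one hL0).mpr (by linarith [hxi.2])
  set m : ℕ := min (⌊t * κ⌋₊) (κ - 1) with hm
  have hκR : (0:ℝ) < κ := by exact_mod_cast hκ'
  have hmle : (m : ℝ) ≤ t * κ := by
    calc (m : ℝ) ≤ (⌊t * κ⌋₊ : ℝ) := by exact_mod_cast min_le_left _ _
      _ ≤ t * κ := Nat.floor_le (by positivity)
  have hmge : t * κ ≤ (m : ℝ) + 1 := by
    rcases le_or_gt (⌊t * κ⌋₊) (κ - 1) with h | h
    · have hmeq : m = ⌊t * κ⌋₊ := min_eq_left h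
      rw [hmeq]
      exact (Nat.lt_floor_add_one _).le
    · have hmeq : m = κ - 1 := min_eq_right h.le
      have hcast : ((m : ℝ) + 1) = κ := by
        rw [hmeq]
        have : (1:ℕ) ≤ κ := hκ'
        push_cast [Nat.cast_sub this]
        ring
      rw [hcast]
      calc t * κ ≤ 1 * κ := by
            apply mul_le_mul_of_nonneg_right ht1 hκR.le
        _ = κ := one_mul _
  have htL : t * (b i - a i) = x i - a i := div_mul_cancel₀ _ hL0.ne'
  constructor
  · have h1 : (m : ℝ) / κ ≤ t := by
      rw [div_le_iff₀ hκR]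
      exact hmle
    have h2 : (m : ℝ) / κ * (b i - a i) ≤ t * (b i - a i) :=
      mul_le_mul_of_nonneg_right h1 hL0.le
    simp only [hm]
    linarith [h2, htL]
  · have h1 : t ≤ ((m : ℝ) + 1) / κ := by
      rw [le_div_iff₀ hκR]
      exact hmge
    have h2 : t * (b i - a i) ≤ ((m : ℝ) + 1) / κ * (b i - a i) :=
      mul_le_mul_of_nonneg_right h1 hL0.le
    simp only [hm]
    linarith [h2, htL]

lemma itile_disjoint (hab : ∀ i, a i < b i) {k k' : Fin n → Fin κ} (h : k ≠ k') :
    Disjoint (itile n a b κ fun i => (k i : ℕ)) (itile n a b κ fun i => (k' i : ℕ)) := by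
  obtain ⟨i, hi⟩ : ∃ i, (k i : ℕ) ≠ (k' i : ℕ) := by
    by_contra hcon
    push_neg at hcon
    exact h (funext fun i => Fin.ext (hcon i))
  rw [Set.disjoint_left]
  intro x hx hx'
  have h1 := hx i (Set.mem_univ i)
  have h2 := hx' i (Set.mem_univ i)
  have hL0 : (0:ℝ) < b i - a i := sub_pos.mpr (hab i)
  have hκ0 : (0:ℝ) ≤ κ := Nat.cast_nonneg κ
  have key : ∀ j j' : ℕ, j < j' →
      x i ∈ Set.Ioo (a i + (j:ℝ)/κ*(b i - a i)) (a i + ((j:ℝ)+1)/κ*(b i - a i)) →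
      x i ∈ Set.Ioo (a i + (j':ℝ)/κ*(b i - a i)) (a i + ((j':ℝ)+1)/κ*(b i - a i)) → False := by
    intro j j' hjj' hj hj'
    have hcast : (j:ℝ) + 1 ≤ (j':ℝ) := by exact_mod_cast hjj'
    have hle : a i + ((j:ℝ)+1)/κ*(b i - a i) ≤ a i + (j':ℝ)/κ*(b i - a i) := by
      gcongr
    linarith [hj.2, hj'.1]
  rcases hi.lt_or_gt with hlt | hlt
  · exact key _ _ hlt h1 h2
  · exact key _ _ hlt h2 h1

lemma volume_tile_diff_itile (hκ : κ ≠ 0) (hab : ∀ i, a i < b i) (k : Fin n → ℕ) :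
    volume (tile n a b κ k \ itile n a b κ k) = 0 := by
  rw [measure_diff (itile_subset_tile k) (measurableSet_itile k).nullMeasurableSet
    (by rw [volume_itile hκ hab]; exact ENNReal.ofReal_ne_top),
    volume_tile hκ hab, volume_itile hκ hab, tsub_self]

lemma volume_tile_inter (hκ : κ ≠ 0) (hab : ∀ i, a i < b i) (k : Fin n → ℕ)
    (S : Set (Fin n → ℝ)) :
    volume (tile n a b κ k ∩ S) = volume (itile n a b κ k ∩ S) := by
  apply le_antisymm
  · calc volume (tile n a b κ k ∩ S)
        ≤ volume ((itile n a b κ k ∩ S) ∪ (tile n a b κ k \ itile n a b κ k)) := by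
          apply measure_mono
          rintro x ⟨hxt, hxS⟩
          by_cases hx : x ∈ itile n a b κ k
          · exact Or.inl ⟨hx, hxS⟩
          · exact Or.inr ⟨hxt, hx⟩
      _ ≤ volume (itile n a b κ k ∩ S) + volume (tile n a b κ k \ itile n a b κ k) :=
          measure_union_le _ _
      _ = volume (itile n a b κ k ∩ S) := by
          rw [volume_tile_diff_itile hκ hab k, add_zero]
  · exact measure_mono (Set.inter_subset_inter_left _ (itile_subset_tile k))

lemma sum_volume_tile_inter (hκ : κ ≠ 0) (hab : ∀ i, a i < b i)
    {S : Set (Fin n → ℝ)} (hS : MeasurableSet S)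
    (hSH : S ⊆ Set.univ.pi fun i => Set.Icc (a i) (b i)) :
    ∑ k : Fin n → Fin κ, volume (tile n a b κ (fun i => (k i : ℕ)) ∩ S) = volume S := by
  have h1 : ∀ k : Fin n → Fin κ,
      volume (tile n a b κ (fun i => (k i : ℕ)) ∩ S)
        = volume (itile n a b κ (fun i => (k i : ℕ)) ∩ S) :=
    fun k => volume_tile_inter hκ hab _ S
  rw [Finset.sum_congr rfl fun k _ => h1 k]
  have hdisj : Pairwise (Function.onFun Disjoint
      fun k : Fin n → Fin κ => itile n a b κ (fun i => (k i : ℕ)) ∩ S) :=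
    fun k k' h =>
      ((itile_disjoint hab h).mono Set.inter_subset_left Set.inter_subset_left)
  have hmeas : ∀ k : Fin n → Fin κ,
      MeasurableSet (itile n a b κ (fun i => (k i : ℕ)) ∩ S) :=
    fun k => (measurableSet_itile _).inter hS
  have h2 := measure_iUnion (μ := volume) hdisj hmeas
  rw [tsum_fintype] at h2
  rw [← h2]
  apply le_antisymm
  · exact measure_mono (Set.iUnion_subset fun k => Set.inter_subset_right)
  · have hScov : S ⊆ (⋃ k : Fin n → Fin κ, itile n a b κ (fun i => (k i : ℕ)) ∩ S)
        ∪ (⋃ k : Fin n → Fin κ,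
            tile n a b κ (fun i => (k i : ℕ)) \ itile n a b κ (fun i => (k i : ℕ))) := by
      intro x hxS
      obtain ⟨k, hk⟩ := exists_mem_tile hκ hab (hSH hxS)
      by_cases hx : x ∈ itile n a b κ fun i => (k i : ℕ)
      · exact Or.inl (Set.mem_iUnion.mpr ⟨k, hx, hxS⟩)
      · exact Or.inr (Set.mem_iUnion.mpr ⟨k, hk, hx⟩)
    calc volume S ≤ volume ((⋃ k : Fin n → Fin κ, itile n a b κ (fun i => (k i : ℕ)) ∩ S)
        ∪ (⋃ k : Fin n → Fin κ,
            tile n a b κ (fun i => (k i : ℕ)) \ itile n a b κ (fun i => (k i : ℕ)))) :=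
          measure_mono hScov
      _ ≤ volume (⋃ k : Fin n → Fin κ, itile n a b κ (fun i => (k i : ℕ)) ∩ S)
          + volume (⋃ k : Fin n → Fin κ,
            tile n a b κ (fun i => (k i : ℕ)) \ itile n a b κ (fun i => (k i : ℕ))) :=
          measure_union_le _ _
      _ = volume (⋃ k : Fin n → Fin κ, itile n a b κ (fun i => (k i : ℕ)) ∩ S) := by
          rw [measure_iUnion_null fun k => volume_tile_diff_itile hκ hab _, add_zero]

lemma tile_subset (hκ : κ ≠ 0) (hab : ∀ i, a i < b i) (k : Fin n → Fin κ) :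
    tile n a b κ (fun i => (k i : ℕ)) ⊆ Set.univ.pi fun i => Set.Icc (a i) (b i) := by
  intro x hx i _
  have h := hx i (Set.mem_univ i)
  have hL : 0 < b i - a i := sub_pos.mpr (hab i)
  have hκ0 : (0:ℝ) < κ := by exact_mod_cast Nat.pos_of_ne_zero hκ
  constructor
  · have h0 : 0 ≤ ((k i : ℕ):ℝ)/κ * (b i - a i) := by positivity
    linarith [h.1]
  · have hk1 : ((k i : ℕ):ℝ) + 1 ≤ κ := by exact_mod_cast (k i).2
    have h1 : (((k i : ℕ):ℝ)+1)/κ * (b i - a i) ≤ 1 * (b i - a i) := by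
      apply mul_le_mul_of_nonneg_right _ hL.le
      rw [div_le_one hκ0]
      exact hk1
    have h2 := h.2
    linarith

open Classical in
lemma tile_term_bound (hκ : κ ≠ 0) (hab : ∀ i, a i < b i)
    (X W : Set (Fin n → ℝ)) (hXm : MeasurableSet X) (hWfin : volume W ≠ ⊤)
    (k : Fin n → Fin κ)
    (hsub : tile n a b κ (fun i => (k i : ℕ)) ∩ X ⊆ W
      ∨ tile n a b κ (fun i => (k i : ℕ)) \ X ⊆ W) :
    |(if isApproxTile n a b κ X k then tileVol n a b κ else 0)
        - (volume (tile n a b κ (fun i => (k i : ℕ)) ∩ X)).toReal|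
      ≤ (volume (tile n a b κ (fun i => (k i : ℕ)) ∩ W)).toReal := by
  set T := tile n a b κ (fun i => (k i : ℕ)) with hT
  set V := tileVol n a b κ with hV
  have hV0 : 0 ≤ V := tileVol_nonneg hab
  have hTvol : volume T = ENNReal.ofReal V := volume_tile hκ hab _
  have vfin : volume (T ∩ X) ≠ ⊤ := by
    refine ne_top_of_le_ne_top ?_ (measure_mono Set.inter_subset_left)
    rw [hTvol]; exact ENNReal.ofReal_ne_top
  have wfin : volume (T ∩ W) ≠ ⊤ :=
    ne_top_of_le_ne_top hWfin (measure_mono Set.inter_subset_right)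
  have ufin : volume (T \ X) ≠ ⊤ := by
    refine ne_top_of_le_ne_top ?_ (measure_mono Set.diff_subset)
    rw [hTvol]; exact ENNReal.ofReal_ne_top
  set v := (volume (T ∩ X)).toReal with hv
  set u := (volume (T \ X)).toReal with hu
  set w := (volume (T ∩ W)).toReal with hw
  have hv0 : 0 ≤ v := ENNReal.toReal_nonneg
  have hu0 : 0 ≤ u := ENNReal.toReal_nonneg
  have hvu : v + u = V := by
    have h := measure_inter_add_diff (μ := volume) T hXm
    have := congrArg ENNReal.toReal h
    rwa [ENNReal.toReal_add vfin ufin, hTvol, ENNReal.toReal_ofReal hV0] at this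
  have habs : ((ENNReal.ofReal V) / 2).toReal = V / 2 := by
    rw [ENNReal.toReal_div, ENNReal.toReal_ofReal hV0]
    norm_num
  have hdivtop : (ENNReal.ofReal V) / 2 ≠ ⊤ :=
    (ENNReal.div_lt_top ENNReal.ofReal_ne_top (by norm_num)).ne
  have happrox : isApproxTile n a b κ X k ↔
      ENNReal.ofReal V / 2 ≤ volume (T ∩ X) := Iff.rfl
  rcases hsub with hsub | hsub
  · have hvw : v ≤ w := by
      apply ENNReal.toReal_mono wfin
      exact measure_mono (Set.subset_inter Set.inter_subset_left hsub)
    by_cases hA : isApproxTile n a b κ X k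
    · rw [happrox] at hA
      have h1 : V / 2 ≤ v := by
        have := ENNReal.toReal_mono vfin hA
        rwa [habs] at this
      rw [if_pos (happrox.mpr hA), abs_of_nonneg (by linarith [hvu])]
      linarith
    · rw [if_neg hA]
      rw [abs_of_nonpos (by linarith), neg_sub, sub_zero]
      linarith
  · have huw : u ≤ w := by
      apply ENNReal.toReal_mono wfin
      exact measure_mono (Set.subset_inter Set.diff_subset hsub)
    by_cases hA : isApproxTile n a b κ X k
    · rw [happrox] at hA
      have h1 : V / 2 ≤ v := by
        have := ENNReal.toReal_mono vfin hA
        rwa [habs] at this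
      rw [if_pos (happrox.mpr hA), abs_of_nonneg (by linarith [hvu])]
      linarith
    · have h1 : v ≤ V / 2 := by
        rw [happrox] at hA
        push_neg at hA
        have := ENNReal.toReal_mono hdivtop hA.le
        rwa [habs] at this
      rw [if_neg hA]
      rw [abs_of_nonpos (by linarith), neg_sub, sub_zero]
      linarith

end GridAux

open GridAux in
/-- For any Lebesgue-measurable subset `X` of the rectangle `H = ∏ i, [a i, b i]`, the
rectangular κ-grid measures of `X` converge to the Lebesgue measure of `X` as `κ → ∞`. -/
theorem gridMeasure_tendsto_measure (n : ℕ) (hn : 1 ≤ n) (a b : Fin n → ℝ)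
    (hab : ∀ i, a i < b i) (X : Set (Fin n → ℝ))
    (hX : X ⊆ Set.univ.pi fun i => Set.Icc (a i) (b i)) (hXm : MeasurableSet X) :
    Tendsto (fun κ : ℕ => gridMeasure n a b κ X) atTop (nhds (volume X).toReal) := by
  classical
  have hHc : IsCompact (Set.univ.pi fun i => Set.Icc (a i) (b i)) :=
    isCompact_univ_pi fun i => isCompact_Icc
  have hXfin : volume X ≠ ⊤ := ((measure_mono hX).trans_lt hHc.measure_lt_top).ne
  rw [Metric.tendsto_atTop]
  intro ε hε
  have hε2 : ENNReal.ofReal (ε / 2) ≠ 0 := by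
    simp only [ne_eq, ENNReal.ofReal_eq_zero, not_le]
    linarith
  obtain ⟨K, hKX, hKc, hK⟩ := hXm.exists_isCompact_diff_lt hXfin hε2
  obtain ⟨U, hXU, hUo, hUfin, hU⟩ := hXm.exists_isOpen_diff_lt hXfin hε2
  obtain ⟨δ, hδ, hthick⟩ := hKc.exists_thickening_subset_open hUo (hKX.trans hXU)
  set C : ℝ := ∑ i, (b i - a i) with hC
  have : Nonempty (Fin n) := ⟨⟨0, hn⟩⟩
  have hC0 : 0 < C :=
    Finset.sum_pos (fun i _ => sub_pos.mpr (hab i)) Finset.univ_nonempty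
  set N : ℕ := ⌈C / δ⌉₊ + 1 with hN
  refine ⟨N, fun κ hκN => ?_⟩
  have hκ : κ ≠ 0 := by
    have : 1 ≤ N := by omega
    omega
  have hκR : (0:ℝ) < κ := by exact_mod_cast Nat.pos_of_ne_zero hκ
  have hCκ : C / κ < δ := by
    rw [div_lt_iff₀ hκR]
    have h1 : C / δ < (N : ℝ) := by
      calc C / δ ≤ (⌈C / δ⌉₊ : ℝ) := Nat.le_ceil _
        _ < N := by rw [hN]; push_cast; linarith
    have h2 : (N : ℝ) ≤ κ := by exact_mod_cast hκN
    have h3 : C < δ * N := by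
      rw [div_lt_iff₀ hδ] at h1
      linarith
    calc C < δ * N := h3
      _ ≤ δ * κ := by nlinarith
  -- the "bad" region
  set W : Set (Fin n → ℝ) := (U \ K) ∩ Set.univ.pi fun i => Set.Icc (a i) (b i) with hW
  have hWm : MeasurableSet W :=
    ((hUo.measurableSet.diff hKc.measurableSet).inter hHc.measurableSet)
  have hWfin : volume W ≠ ⊤ := by
    refine ne_top_of_le_ne_top hUfin.ne
      (measure_mono (fun x hx => hx.1.1))
  have hgood : ∀ k : Fin n → Fin κ,
      tile n a b κ (fun i => (k i : ℕ)) ∩ X ⊆ W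
        ∨ tile n a b κ (fun i => (k i : ℕ)) \ X ⊆ W := by
    intro k
    set T := tile n a b κ (fun i => (k i : ℕ)) with hT
    have hTH : T ⊆ Set.univ.pi fun i => Set.Icc (a i) (b i) := tile_subset hκ hab k
    by_cases hTK : (T ∩ K).Nonempty
    · right
      obtain ⟨y, hyT, hyK⟩ := hTK
      have hTU : T ⊆ U := by
        intro x hxT
        apply hthick
        rw [Metric.mem_thickening_iff]
        refine ⟨y, hyK, lt_of_le_of_lt ?_ hCκ⟩
        rw [dist_pi_le_iff (by positivity)]
        intro i
        have h1 := hxT i (Set.mem_univ i)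
        have h2 := hyT i (Set.mem_univ i)
        have hlen := len_eq (a := a) (b := b) hκ i (fun i => (k i : ℕ))
        have hLC : b i - a i ≤ C :=
          Finset.single_le_sum (f := fun j => b j - a j)
            (fun j _ => (sub_pos.mpr (hab j)).le) (Finset.mem_univ i)
        rw [Real.dist_eq]
        have h3 : |x i - y i| ≤ (b i - a i) / κ := by
          rw [abs_sub_le_iff]
          constructor <;> linarith [h1.1, h1.2, h2.1, h2.2]
        calc |x i - y i| ≤ (b i - a i) / κ := h3
          _ ≤ C / κ := by gcongr
      rintro x ⟨hxT, hxX⟩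
      exact ⟨⟨hTU hxT, fun hxK => hxX (hKX hxK)⟩, hTH hxT⟩
    · left
      rintro x ⟨hxT, hxX⟩
      exact ⟨⟨hXU hxX, fun hxK => hTK ⟨x, hxT, hxK⟩⟩, hTH hxT⟩
  have hsum : ∑ k : Fin n → Fin κ, volume (tile n a b κ (fun i => (k i : ℕ)) ∩ X)
      = volume X := sum_volume_tile_inter hκ hab hXm hX
  have hfin1 : ∀ k ∈ (Finset.univ : Finset (Fin n → Fin κ)),
      volume (tile n a b κ (fun i => (k i : ℕ)) ∩ X) ≠ ⊤ :=
    fun k _ => ne_top_of_le_ne_top hXfin (measure_mono Set.inter_subset_right)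
  have hfin2 : ∀ k ∈ (Finset.univ : Finset (Fin n → Fin κ)),
      volume (tile n a b κ (fun i => (k i : ℕ)) ∩ W) ≠ ⊤ :=
    fun k _ => ne_top_of_le_ne_top hWfin (measure_mono Set.inter_subset_right)
  rw [Real.dist_eq]
  have hexp : gridMeasure n a b κ X - (volume X).toReal
      = ∑ k : Fin n → Fin κ,
          ((if isApproxTile n a b κ X k then tileVol n a b κ else 0)
            - (volume (tile n a b κ (fun i => (k i : ℕ)) ∩ X)).toReal) := by
    rw [Finset.sum_sub_distrib]
    congr 1
    rw [← ENNReal.toReal_sum hfin1, hsum]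
  rw [hexp]
  have hWH : W ⊆ Set.univ.pi fun i => Set.Icc (a i) (b i) := fun x hx => hx.2
  calc |∑ k : Fin n → Fin κ,
          ((if isApproxTile n a b κ X k then tileVol n a b κ else 0)
            - (volume (tile n a b κ (fun i => (k i : ℕ)) ∩ X)).toReal)|
      ≤ ∑ k : Fin n → Fin κ,
          |(if isApproxTile n a b κ X k then tileVol n a b κ else 0)
            - (volume (tile n a b κ (fun i => (k i : ℕ)) ∩ X)).toReal| :=
        Finset.abs_sum_le_sum_abs _ _
    _ ≤ ∑ k : Fin n → Fin κ,
          (volume (tile n a b κ (fun i => (k i : ℕ)) ∩ W)).toReal :=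
        Finset.sum_le_sum fun k _ =>
          tile_term_bound hκ hab X W hXm hWfin k (hgood k)
    _ = (volume W).toReal := by
        rw [← ENNReal.toReal_sum hfin2, sum_volume_tile_inter hκ hab hWm hWH]
    _ < ε := by
        have hWsub : W ⊆ (U \ X) ∪ (X \ K) := by
          rintro x ⟨⟨hxU, hxK⟩, _⟩
          by_cases hx : x ∈ X
          · exact Or.inr ⟨hx, hxK⟩
          · exact Or.inl ⟨hxU, hx⟩
        have h1 : volume W < ENNReal.ofReal ε := by
          calc volume W ≤ volume (U \ X) + volume (X \ K) :=
                (measure_mono hWsub).trans (measure_union_le _ _)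
            _ < ENNReal.ofReal (ε / 2) + ENNReal.ofReal (ε / 2) := by
                exact ENNReal.add_lt_add hU hK
            _ = ENNReal.ofReal ε := by
                rw [← ENNReal.ofReal_add (by linarith) (by linarith)]
                norm_num
        exact ENNReal.toReal_lt_of_lt_ofReal h1
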